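/- arXiv:2405.17638 — 3 statements merged into one kernel-verified Lean document; each statement's English description precedes it below -/
import Mathlib

section
/- Assume the D×D submatrix Ŝ_D is irreducible and aperiodic with spectral radius λ < 1, and let ν be the quasi-stationary distribution, i.e. the unique probability vector on D with ν^T Ŝ_D = λ ν^T. Then for every integer τ ≥ 1 and every submultiplicative norm ‖·‖ on D×D real matrices (i.e. ‖AB‖ ≤ ‖A‖·‖B‖ for all A, B), one has ‖(I − Ŝ_D^τ)^{-1}‖ ≥ E_ν[T]/τ, where E_ν[T] = ∑_{i∈D} ν(i)·E_i[T]. -/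
open MeasureTheory Finset Filter
open scoped ENNReal NNReal ENat

noncomputable section

namespace RareTD

variable {n : ℕ}

/-- `P` is a row-stochastic matrix. -/
def IsStochastic (P : Matrix (Fin n) (Fin n) ℝ) : Prop :=
  (∀ i j, 0 ≤ P i j) ∧ ∀ i, ∑ j, P i j = 1

/-- Irreducibility of a nonnegative matrix. -/
def IsIrreducible (P : Matrix (Fin n) (Fin n) ℝ) : Prop :=
  ∀ i j, ∃ m : ℕ, 0 < m ∧ 0 < (P ^ m) i j

/-- `Pr i` is the law of the Markov chain with transition matrix `P` started at `i`,
characterized by its finite-dimensional distributions. -/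
def IsMarkovFamily (P : Matrix (Fin n) (Fin n) ℝ)
    (Pr : Fin n → Measure (ℕ → Fin n)) : Prop :=
  (∀ i, IsProbabilityMeasure (Pr i)) ∧
    ∀ (i : Fin n) (m : ℕ) (x : ℕ → Fin n),
      (Pr i {ω | ∀ t ≤ m, ω t = x t}).toReal =
        (if x 0 = i then 1 else 0) * ∏ t ∈ Finset.range m, P (x t) (x (t + 1))

/-- The matrix `S` of the chain stopped on exiting `D`. -/
def stopMat (P : Matrix (Fin n) (Fin n) ℝ) (D : Finset (Fin n)) :
    Matrix (Fin n) (Fin n) ℝ :=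
  fun i j => if i ∈ D then P i j else if i = j then 1 else 0

/-- Exit time `T = min {t ≥ 0 : ω t ∉ D}`, with value `⊤` if the path never leaves `D`. -/
def exitT (D : Finset (Fin n)) (ω : ℕ → Fin n) : ℕ∞ :=
  ⨅ (t : ℕ) (_ : ω t ∉ D), (t : ℕ∞)

/-- Hitting time of a set at positive times, `min {t > 0 : ω t ∈ A}`. -/
def hitT (A : Set (Fin n)) (ω : ℕ → Fin n) : ℕ∞ :=
  ⨅ (t : ℕ) (_ : 0 < t ∧ ω t ∈ A), (t : ℕ∞)

/-- The stopped path `t ↦ X_{t ∧ T}`. -/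
def stopped (D : Finset (Fin n)) (ω : ℕ → Fin n) : ℕ → Fin n
  | 0 => ω 0
  | t + 1 => if stopped D ω t ∈ D then ω (t + 1) else stopped D ω t

/-- `R_D`, the reward restricted to `D`. -/
def RD (D : Finset (Fin n)) (R : Fin n → ℝ) : Fin n → ℝ := fun i => if i ∈ D then R i else 0

/-- The value function `u(i) = E_i[∑_{t=0}^{T} R(X_t)]`, in `[0,∞]`. -/
def valueE (Pr : Fin n → Measure (ℕ → Fin n)) (D : Finset (Fin n)) (R : Fin n → ℝ)
    (i : Fin n) : ℝ≥0∞ :=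
  ∑' t : ℕ, ∫⁻ ω, Set.indicator {ω' : ℕ → Fin n | (t : ℕ∞) ≤ exitT D ω'}
      (fun ω' => ENNReal.ofReal (R (ω' t))) ω ∂(Pr i)

/-- The real-valued value function. -/
def valueR (Pr : Fin n → Measure (ℕ → Fin n)) (D : Finset (Fin n)) (R : Fin n → ℝ)
    (i : Fin n) : ℝ := (valueE Pr D R i).toReal

/-- Replace by `0` every row and column with index outside `D`. -/
def zeroD (D : Finset (Fin n)) (M : Matrix (Fin n) (Fin n) ℝ) : Matrix (Fin n) (Fin n) ℝ :=
  fun i j => if i ∈ D ∧ j ∈ D then M i j else 0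

/-- The asymptotic variance `σ_i²` of the LSTD estimator. -/
def avar (P : Matrix (Fin n) (Fin n) ℝ) (Pr : Fin n → Measure (ℕ → Fin n))
    (D : Finset (Fin n)) (R : Fin n → ℝ) (μ : Fin n → ℝ) (τ : ℕ) (i : Fin n) : ℝ :=
  ∑ k ∈ D, (μ k)⁻¹ * ((((1 : Matrix (Fin n) (Fin n) ℝ) - zeroD D (stopMat P D ^ τ))⁻¹) i k) ^ 2 *
    ∫ ω, (∑ t ∈ Finset.range τ, RD D R (stopped D ω t)
        + valueR Pr D R (stopped D ω τ) - valueR Pr D R k) ^ 2 ∂(Pr k)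

/-- Mean exit time `E_i[T] = ∑_{t≥0} P_i[T > t]`, in `[0,∞]`. -/
def meanExit (Pr : Fin n → Measure (ℕ → Fin n)) (D : Finset (Fin n)) (i : Fin n) : ℝ≥0∞ :=
  ∑' t : ℕ, Pr i {ω | (t : ℕ∞) < exitT D ω}

/-- The event `T_ℓ^τ < min (T_k^τ, T_{Dᶜ∖{ℓ}}^τ)` for the `τ`-step chain. -/
def Qset (D : Finset (Fin n)) (k ℓ : Fin n) : Set (ℕ → Fin n) :=
  {ω | hitT {ℓ} ω < min (hitT {k} ω) (hitT ((D : Set (Fin n))ᶜ \ {ℓ}) ω)}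

/-- Green's function of the `τ`-step chain: `E_i[∑_{t=0}^{T^τ-1} 1{Y_t^τ = k}]`. -/
def greenY (PrY : Fin n → Measure (ℕ → Fin n)) (D : Finset (Fin n)) (i k : Fin n) : ℝ≥0∞ :=
  ∑' t : ℕ, PrY i {ω | (t : ℕ∞) < exitT D ω ∧ ω t = k}

/-- Green's function of the chain: `E_ℓ[∑_{t=0}^{T} 1{X_t = j}]` (the sum includes `t = T`). -/
def greenX (Pr : Fin n → Measure (ℕ → Fin n)) (D : Finset (Fin n)) (ℓ j : Fin n) : ℝ≥0∞ :=
  ∑' t : ℕ, Pr ℓ {ω | (t : ℕ∞) ≤ exitT D ω ∧ ω t = j}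

/-!
Irreducibility makes the quasi-stationary distribution `ν` strictly positive, so `ν` is a positive
left eigenvector of `Ŝ_D^τ` for the eigenvalue `λ^τ < 1`. Hence `I - Ŝ_D^τ` is invertible and
`νᵀ (I - Ŝ_D^τ)⁻¹ = (1 - λ^τ)⁻¹ νᵀ`; testing a submultiplicative norm on the rank-one matrix all of
whose rows are `νᵀ` gives `‖(I - Ŝ_D^τ)⁻¹‖ ≥ (1 - λ^τ)⁻¹`. On the probabilistic side
`P_ν(T > t) ≤ νᵀ Ŝ_D^t 𝟙 = λ^t`, so `E_ν[T] ≤ (1 - λ)⁻¹`, and Bernoulli's inequality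
`1 - λ^τ ≤ τ (1 - λ)` connects the two bounds.
-/

open Matrix

section NonnegMatrix

variable {β : Type*} [Fintype β]

theorem vecMul_pow_eq_pow_smul {R : Type*} [CommSemiring R] [DecidableEq β] {S : Matrix β β R}
    {ν : β → R} {c : R} (h : ν ᵥ* S = c • ν) (m : ℕ) : ν ᵥ* S ^ m = c ^ m • ν := by
  induction m with
  | zero => simp
  | succ m ih => rw [pow_succ, ← vecMul_vecMul, ih, smul_vecMul, h, smul_smul, pow_succ]

theorem vecMul_inv_eq_inv_smul {K : Type*} [Field K] [DecidableEq β] {A : Matrix β β K}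
    (hA : IsUnit A.det) {ν : β → K} {c : K} (h : ν ᵥ* A = c • ν) : ν ᵥ* A⁻¹ = c⁻¹ • ν := by
  have hν : ν = c • ν ᵥ* A⁻¹ := by
    rw [← smul_vecMul, ← h, vecMul_vecMul, mul_nonsing_inv A hA, vecMul_one]
  rcases eq_or_ne c 0 with rfl | hc
  · rw [hν, zero_smul, zero_vecMul, smul_zero]
  · rw [hν, smul_smul, inv_mul_cancel₀ hc, one_smul, ← hν]

theorem sum_path_prod_eq_dotProduct_pow_mulVec {R : Type*} [CommSemiring R] [DecidableEq β]
    (S : Matrix β β R) (t : ℕ) (v : β → R) :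
    ∑ x : Fin (t + 1) → β, v (x 0) * ∏ s : Fin t, S (x s.castSucc) (x s.succ) =
      v ⬝ᵥ (S ^ t *ᵥ 1) := by
  induction t generalizing v with
  | zero =>
    rw [← (Equiv.funUnique (Fin 1) β).symm.sum_comp]
    simp [dotProduct]
  | succ t ih =>
    rw [← (Fin.consEquiv fun _ => β).sum_comp, Fintype.sum_prod_type]
    simp only [Fin.consEquiv_apply, Fin.prod_univ_succ, Fin.cons_zero, ← Fin.succ_castSucc,
      Fin.cons_succ, Fin.castSucc_zero, ← mul_assoc]
    simp only [mul_assoc, ← mul_sum, ih]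
    rw [pow_succ', ← mulVec_mulVec]
    rfl

theorem pos_of_vecMul_eq_smul [DecidableEq β] {S : Matrix β β ℝ} (hS : ∀ a b, 0 ≤ S a b)
    (hirr : ∀ a b, ∃ m, 0 < (S ^ m) a b) {ν : β → ℝ} (hν0 : 0 ≤ ν) (hν : ν ≠ 0) {c : ℝ}
    (h : ν ᵥ* S = c • ν) (b : β) : 0 < ν b := by
  obtain ⟨a, ha⟩ := Function.ne_iff.1 hν
  obtain ⟨m, hm⟩ := hirr a b
  have hpos : 0 < c ^ m * ν b :=
    calc 0 < ν a * (S ^ m) a b := mul_pos ((hν0 a).lt_of_ne' ha) hm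
      _ ≤ (ν ᵥ* S ^ m) b :=
        single_le_sum (f := fun a => ν a * (S ^ m) a b)
          (fun a _ => mul_nonneg (hν0 a) (pow_apply_nonneg hS m a b)) (mem_univ a)
      _ = c ^ m * ν b := by rw [vecMul_pow_eq_pow_smul h]; rfl
  exact (hν0 b).lt_of_ne' fun h0 => by simp [h0] at hpos

theorem nonneg_of_vecMul_eq_smul {S : Matrix β β ℝ} (hS : ∀ a b, 0 ≤ S a b) {ν : β → ℝ}
    (hν0 : 0 ≤ ν) {a : β} (ha : 0 < ν a) {c : ℝ} (h : ν ᵥ* S = c • ν) : 0 ≤ c := by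
  have : 0 ≤ c * ν a := by
    rw [← smul_eq_mul, ← Pi.smul_apply, ← h]
    exact dotProduct_nonneg_of_nonneg hν0 fun b => hS b a
  exact nonneg_of_mul_nonneg_left this ha

theorem det_one_sub_ne_zero_of_vecMul_eq_smul [DecidableEq β] {M : Matrix β β ℝ}
    (hM : ∀ a b, 0 ≤ M a b) {w : β → ℝ} (hw : ∀ a, 0 < w a) {μ : ℝ} (hμ : μ < 1)
    (h : w ᵥ* M = μ • w) : (1 - M).det ≠ 0 := by
  intro hdet
  obtain ⟨v, hv0, hv⟩ := exists_mulVec_eq_zero_iff.2 hdet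
  have hfix : M *ᵥ v = v := by
    rw [sub_mulVec, one_mulVec, sub_eq_zero] at hv
    exact hv.symm
  -- `w ⬝ᵥ |v|` is a norm in which `M` contracts by the factor `μ < 1`, yet `M` fixes `v`.
  set u : β → ℝ := fun a => |v a|
  have hu : u ≤ M *ᵥ u := fun a =>
    calc |v a| = |∑ b, M a b * v b| := by rw [← congrFun hfix a]; rfl
      _ ≤ ∑ b, |M a b * v b| := abs_sum_le_sum_abs _ _
      _ = (M *ᵥ u) a := by simp only [abs_mul, abs_of_nonneg (hM _ _)]; rfl
  have hwu : w ⬝ᵥ u ≤ μ * (w ⬝ᵥ u) :=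
    calc w ⬝ᵥ u ≤ w ⬝ᵥ (M *ᵥ u) := dotProduct_le_dotProduct_of_nonneg_left hu fun a => (hw a).le
      _ = μ * (w ⬝ᵥ u) := by rw [dotProduct_mulVec, h, smul_dotProduct, smul_eq_mul]
  have hterm : ∀ a, 0 ≤ w a * u a := fun a => mul_nonneg (hw a).le (abs_nonneg _)
  have hzero : w ⬝ᵥ u = 0 :=
    le_antisymm (by nlinarith [sum_nonneg fun a (_ : a ∈ univ) => hterm a])
      (sum_nonneg fun a _ => hterm a)
  refine hv0 (funext fun a => ?_)
  have := (sum_eq_zero_iff_of_nonneg fun a _ => hterm a).1 hzero a (mem_univ a)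
  simpa [u, (hw a).ne'] using this

theorem abs_le_of_vecMul_eq_smul (N : Matrix β β ℝ → ℝ) (hNnonneg : ∀ A, 0 ≤ N A)
    (hNzero : ∀ A, N A = 0 → A = 0) (hNsmul : ∀ (c : ℝ) (A), N (c • A) = |c| * N A)
    (hNmul : ∀ A B, N (A * B) ≤ N A * N B) {A : Matrix β β ℝ} {ν : β → ℝ} (hν : ν ≠ 0) {c : ℝ}
    (h : ν ᵥ* A = c • ν) : |c| ≤ N A := by
  obtain ⟨a, -⟩ := Function.ne_iff.1 hν
  have : Nonempty β := ⟨a⟩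
  have hV : 0 < N (replicateRow β ν) := (hNnonneg _).lt_of_ne' fun h0 =>
    hν ((replicateRow_eq_zero ν).1 (hNzero _ h0))
  have hmul := hNmul (replicateRow β ν) A
  rw [← replicateRow_vecMul, h, replicateRow_smul, hNsmul] at hmul
  exact le_of_mul_le_mul_left (by linarith) hV

end NonnegMatrix

theorem mem_of_lt_exitT {D : Finset (Fin n)} {ω : ℕ → Fin n} {t s : ℕ}
    (hω : (t : ℕ∞) < exitT D ω) (hs : s ≤ t) : ω s ∈ D := by
  by_contra hsD
  have : exitT D ω ≤ s := iInf₂_le s hsD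
  exact absurd (hω.trans_le this) (not_lt.2 (by exact_mod_cast hs))

theorem IsMarkovFamily.measure_cylinder {P : Matrix (Fin n) (Fin n) ℝ}
    {Pr : Fin n → Measure (ℕ → Fin n)} (hPr : IsMarkovFamily P Pr) (i : Fin n) {t : ℕ} (y : Fin (t + 1) → Fin n) :
    Pr i {ω | ∀ s : Fin (t + 1), ω s = y s} =
      ENNReal.ofReal ((if y 0 = i then 1 else 0) * ∏ s : Fin t, P (y s.castSucc) (y s.succ)) := by
  have := hPr.1 i
  set x : ℕ → Fin n := fun s => y ⟨min s t, by omega⟩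
  have hx : ∀ s (hs : s < t + 1), x s = y ⟨s, hs⟩ := fun s hs =>
    congrArg y (Fin.ext (min_eq_left (by omega)))
  have hset : {ω : ℕ → Fin n | ∀ s : Fin (t + 1), ω s = y s} = {ω | ∀ s ≤ t, ω s = x s} := by
    ext ω
    refine ⟨fun h s hs => ?_, fun h s => ?_⟩
    · rw [hx s (by omega)]; exact h ⟨s, by omega⟩
    · rw [h s (by omega), hx s s.2]
  rw [hset, ← ENNReal.ofReal_toReal (measure_ne_top (Pr i) _), hPr.2 i t x, Finset.prod_range,
    hx 0 t.succ_pos]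
  simp only [hx _ (Nat.lt_succ_of_lt (Fin.is_lt _)), hx _ (Nat.succ_lt_succ (Fin.is_lt _))]
  rfl

theorem IsMarkovFamily.measure_lt_exitT_le {P : Matrix (Fin n) (Fin n) ℝ} (hP : ∀ i j, 0 ≤ P i j)
    {Pr : Fin n → Measure (ℕ → Fin n)} (hPr : IsMarkovFamily P Pr) {D : Finset (Fin n)}
    {Shat : Matrix D D ℝ} (hShat : ∀ a b, Shat a b = P a.1 b.1) (t : ℕ) (a : D) :
    Pr a {ω | (t : ℕ∞) < exitT D ω} ≤ ENNReal.ofReal ((Shat ^ t *ᵥ 1) a) := by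
  have hsub : {ω | (t : ℕ∞) < exitT D ω} ⊆
      ⋃ x : Fin (t + 1) → D, {ω | ∀ s : Fin (t + 1), ω s = x s} :=
    fun ω hω => Set.mem_iUnion.2
      ⟨fun s => ⟨ω s, mem_of_lt_exitT hω (Nat.lt_succ_iff.1 s.2)⟩, fun s => rfl⟩
  calc Pr a {ω | (t : ℕ∞) < exitT D ω}
      ≤ ∑ x : Fin (t + 1) → D, Pr a {ω | ∀ s : Fin (t + 1), ω s = x s} :=
        (measure_mono hsub).trans (measure_iUnion_fintype_le _ _)
    _ = ∑ x : Fin (t + 1) → D,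
          ENNReal.ofReal ((Pi.single a 1 : D → ℝ) (x 0) *
            ∏ s : Fin t, Shat (x s.castSucc) (x s.succ)) := by
        refine Finset.sum_congr rfl fun x _ => ?_
        rw [hPr.measure_cylinder a.1 fun s => (x s : Fin n)]
        simp only [Pi.single_apply, hShat, Subtype.coe_inj]
    _ = ENNReal.ofReal ((Shat ^ t *ᵥ 1) a) := by
        rw [← ENNReal.ofReal_sum_of_nonneg, sum_path_prod_eq_dotProduct_pow_mulVec,
          single_dotProduct, one_mul]
        exact fun x _ => mul_nonneg
          ((Pi.single_nonneg.2 zero_le_one : (0 : D → ℝ) ≤ Pi.single a 1) (x 0))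
          (Finset.prod_nonneg fun s _ => hShat _ _ ▸ hP _ _)

theorem IsMarkovFamily.sum_mul_meanExit_le {P : Matrix (Fin n) (Fin n) ℝ} (hP : ∀ i j, 0 ≤ P i j)
    {Pr : Fin n → Measure (ℕ → Fin n)} (hPr : IsMarkovFamily P Pr) {D : Finset (Fin n)}
    {Shat : Matrix D D ℝ} (hShat : ∀ a b, Shat a b = P a.1 b.1) {ν : D → ℝ} (hν0 : 0 ≤ ν)
    (hν1 : ∑ a, ν a = 1) {lam : ℝ} (heig : ν ᵥ* Shat = lam • ν) (hlam0 : 0 ≤ lam)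
    (hlam : lam < 1) :
    ∑ a, ENNReal.ofReal (ν a) * meanExit Pr D a ≤ ENNReal.ofReal (1 - lam)⁻¹ := by
  have hstep (t : ℕ) : ∑ a, ENNReal.ofReal (ν a) * Pr a {ω | (t : ℕ∞) < exitT D ω} ≤
      ENNReal.ofReal (lam ^ t) :=
    calc ∑ a, ENNReal.ofReal (ν a) * Pr a {ω | (t : ℕ∞) < exitT D ω}
        ≤ ∑ a, ENNReal.ofReal (ν a) * ENNReal.ofReal ((Shat ^ t *ᵥ 1) a) := by
          gcongr with a
          exact hPr.measure_lt_exitT_le hP hShat t a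
      _ = ENNReal.ofReal (ν ⬝ᵥ (Shat ^ t *ᵥ 1)) := by
          have hS : ∀ a b, 0 ≤ Shat a b := fun a b => hShat a b ▸ hP _ _
          have hrow : ∀ a, 0 ≤ (Shat ^ t *ᵥ 1) a := fun a =>
            dotProduct_nonneg_of_nonneg (pow_apply_nonneg hS t a) zero_le_one
          simp_rw [← ENNReal.ofReal_mul (hν0 _)]
          rw [← ENNReal.ofReal_sum_of_nonneg fun a _ => mul_nonneg (hν0 a) (hrow a)]
          rfl
      _ = ENNReal.ofReal (lam ^ t) := by
          rw [dotProduct_mulVec, vecMul_pow_eq_pow_smul heig, smul_dotProduct, dotProduct_one,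
            hν1, smul_eq_mul, mul_one]
  calc ∑ a, ENNReal.ofReal (ν a) * meanExit Pr D a
      = ∑' t : ℕ, ∑ a, ENNReal.ofReal (ν a) * Pr a {ω | (t : ℕ∞) < exitT D ω} := by
        simp_rw [meanExit, ← ENNReal.tsum_mul_left]
        exact (Summable.tsum_finsetSum fun _ _ => ENNReal.summable).symm
    _ ≤ ∑' t : ℕ, ENNReal.ofReal (lam ^ t) := ENNReal.tsum_le_tsum hstep
    _ = ENNReal.ofReal (1 - lam)⁻¹ := by
        rw [← ENNReal.ofReal_tsum_of_nonneg (fun t => pow_nonneg hlam0 t)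
          (summable_geometric_of_lt_one hlam0 hlam), tsum_geometric_of_lt_one hlam0 hlam]

theorem inv_one_sub_le_mul_inv_one_sub_pow {lam : ℝ} (hlam0 : 0 ≤ lam) (hlam : lam < 1) {τ : ℕ}
    (hτ : τ ≠ 0) : (1 - lam)⁻¹ ≤ τ * (1 - lam ^ τ)⁻¹ := by
  have hpow : lam ^ τ < 1 := pow_lt_one₀ hlam0 hlam hτ
  have hbern := one_add_mul_sub_le_pow (by linarith : -1 ≤ lam) τ
  rw [← div_eq_mul_inv, inv_eq_one_div, div_le_div_iff₀ (by linarith) (by linarith)]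
  linarith

theorem stmt0_general {n : ℕ} (D : Finset (Fin n))
    (P : Matrix (Fin n) (Fin n) ℝ) (hP : IsStochastic P)
    (Pr : Fin n → Measure (ℕ → Fin n)) (hPr : IsMarkovFamily P Pr)
    (Shat : Matrix {x : Fin n // x ∈ D} {x : Fin n // x ∈ D} ℝ)
    (hShat : ∀ a b, Shat a b = P a.1 b.1)
    -- `Ŝ_D` is irreducible
    (hirr : ∀ a b, ∃ m : ℕ, 0 < m ∧ 0 < (Shat ^ m) a b)
    -- the spectral radius `λ < 1` and the quasi-stationary distribution `ν`, i.e. the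
    -- (unique) probability vector on `D` with `νᵀ Ŝ_D = λ νᵀ`
    (lam : ℝ) (hlam : lam < 1)
    (ν : {x : Fin n // x ∈ D} → ℝ) (hν0 : ∀ a, 0 ≤ ν a)
    (hν1 : ∑ a : {x : Fin n // x ∈ D}, ν a = 1)
    (heig : Matrix.vecMul ν Shat = lam • ν)
    (τ : ℕ) (hτ : 1 ≤ τ)
    -- `N` is a submultiplicative norm on `D × D` real matrices
    (N : Matrix {x : Fin n // x ∈ D} {x : Fin n // x ∈ D} ℝ → ℝ)
    (hNnonneg : ∀ A, 0 ≤ N A) (hNzero : ∀ A, N A = 0 → A = 0)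
    (hNsmul : ∀ (c : ℝ) (A), N (c • A) = |c| * N A)
    (hNmul : ∀ A B, N (A * B) ≤ N A * N B) :
    (∑ a : {x : Fin n // x ∈ D}, ENNReal.ofReal (ν a) * meanExit Pr D a.1) / (τ : ℝ≥0∞)
      ≤ ENNReal.ofReal (N ((1 - Shat ^ τ)⁻¹)) := by
  have hS : ∀ a b, 0 ≤ Shat a b := fun a b => hShat a b ▸ hP.1 _ _
  have hν : ν ≠ 0 := by rintro rfl; simp at hν1
  have hνpos :=
    pos_of_vecMul_eq_smul hS (fun a b => (hirr a b).imp fun _ => And.right) hν0 hν heig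
  obtain ⟨a, -⟩ := Function.ne_iff.1 hν
  have hlam0 : 0 ≤ lam := nonneg_of_vecMul_eq_smul hS hν0 (hνpos a) heig
  have hτ0 : τ ≠ 0 := by omega
  have hpow : ν ᵥ* Shat ^ τ = lam ^ τ • ν := vecMul_pow_eq_pow_smul heig τ
  have hdet := det_one_sub_ne_zero_of_vecMul_eq_smul (pow_apply_nonneg hS τ) hνpos
    (pow_lt_one₀ hlam0 hlam hτ0) hpow
  have hinv : ν ᵥ* (1 - Shat ^ τ)⁻¹ = (1 - lam ^ τ)⁻¹ • ν :=
    vecMul_inv_eq_inv_smul hdet.isUnit (by rw [vecMul_sub, vecMul_one, hpow, sub_smul, one_smul])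
  have hN : (1 - lam ^ τ)⁻¹ ≤ N (1 - Shat ^ τ)⁻¹ :=
    (le_abs_self _).trans (abs_le_of_vecMul_eq_smul N hNnonneg hNzero hNsmul hNmul hν hinv)
  calc (∑ a : {x : Fin n // x ∈ D}, ENNReal.ofReal (ν a) * meanExit Pr D a.1) / (τ : ℝ≥0∞)
      ≤ ENNReal.ofReal (1 - lam)⁻¹ / τ :=
        ENNReal.div_le_div_right (hPr.sum_mul_meanExit_le hP.1 hShat hν0 hν1 heig hlam0 hlam) _
    _ ≤ ENNReal.ofReal (N (1 - Shat ^ τ)⁻¹) := by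
        rw [ENNReal.div_le_iff (by exact_mod_cast hτ0) (ENNReal.natCast_ne_top τ),
          ← ENNReal.ofReal_natCast, ← ENNReal.ofReal_mul (hNnonneg _)]
        refine ENNReal.ofReal_le_ofReal
          ((inv_one_sub_le_mul_inv_one_sub_pow hlam0 hlam hτ0).trans ?_)
        rw [mul_comm]
        gcongr

/-- Lemma 1 of the paper. If the `D × D` submatrix `Ŝ_D` is irreducible and
aperiodic, with quasi-stationary distribution `ν` and corresponding eigenvalue `λ < 1`, then for
every `τ ≥ 1` and every submultiplicative matrix norm `N`,
`N ((I - Ŝ_D^τ)⁻¹) ≥ E_ν[T] / τ`. -/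
theorem stmt0 {n : ℕ} (hn : 2 ≤ n) (D : Finset (Fin n)) (hD : D.Nonempty)
    (hDne : D ≠ Finset.univ)
    (P : Matrix (Fin n) (Fin n) ℝ) (hP : IsStochastic P)
    (Pr : Fin n → Measure (ℕ → Fin n)) (hPr : IsMarkovFamily P Pr)
    (Shat : Matrix {x : Fin n // x ∈ D} {x : Fin n // x ∈ D} ℝ)
    (hShat : ∀ a b, Shat a b = P a.1 b.1)
    -- `Ŝ_D` is irreducible
    (hirr : ∀ a b, ∃ m : ℕ, 0 < m ∧ 0 < (Shat ^ m) a b)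
    -- `Ŝ_D` is aperiodic: for each state, the gcd of the return times is `1`
    (haper : ∀ a : {x : Fin n // x ∈ D}, ∀ d : ℕ,
      (∀ m : ℕ, 0 < m → 0 < (Shat ^ m) a a → d ∣ m) → d = 1)
    -- the spectral radius `λ < 1` and the quasi-stationary distribution `ν`, i.e. the
    -- (unique) probability vector on `D` with `νᵀ Ŝ_D = λ νᵀ`
    (lam : ℝ) (hlam : lam < 1)
    (ν : {x : Fin n // x ∈ D} → ℝ) (hν0 : ∀ a, 0 ≤ ν a)
    (hν1 : ∑ a : {x : Fin n // x ∈ D}, ν a = 1)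
    (heig : Matrix.vecMul ν Shat = lam • ν)
    (τ : ℕ) (hτ : 1 ≤ τ)
    -- `N` is a submultiplicative norm on `D × D` real matrices
    (N : Matrix {x : Fin n // x ∈ D} {x : Fin n // x ∈ D} ℝ → ℝ)
    (hNnonneg : ∀ A, 0 ≤ N A) (hNzero : ∀ A, N A = 0 → A = 0)
    (hNadd : ∀ A B, N (A + B) ≤ N A + N B)
    (hNsmul : ∀ (c : ℝ) (A), N (c • A) = |c| * N A)
    (hNmul : ∀ A B, N (A * B) ≤ N A * N B) :
    (∑ a : {x : Fin n // x ∈ D}, ENNReal.ofReal (ν a) * meanExit Pr D a.1) / (τ : ℝ≥0∞)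
      ≤ ENNReal.ofReal (N ((1 - Shat ^ τ)⁻¹)) :=
  stmt0_general D P hP Pr hPr Shat hShat hirr lam hlam ν hν0 hν1 heig τ hτ N hNnonneg hNzero hNsmul
    hNmul

end RareTD
end
end

section
/- Assume P is irreducible. Then for every integer τ ≥ 1 and every k ∈ D, E_k[(∑_{t=0}^{τ−1} R_D(X_{t∧T}) + u(X_{τ∧T}) − u(k))²] ≤ ∑_{ℓ∈[n], ℓ≠k} (u(ℓ) − u(k))² · ∑_{t=1}^{τ} S^t(k,ℓ). -/
open MeasureTheory Finset Filter
open scoped ENNReal NNReal ENat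

noncomputable section

namespace RareTD

variable {n : ℕ}

/-!
Every functional in sight depends on finitely many coordinates, so expectations under `Pr i` are
finite sums over paths weighted by products of transition probabilities. In these terms
the stopped path `Y` is a Markov chain with transition matrix `S`, and irreducibility makes the chain
killed on leaving `D` die out geometrically fast, so `u` is finite and solves the Poisson equation
`u = R_D + S u`. Hence `∑_{t<τ} R_D(Y_t) + u(Y_τ) - u(Y_0)` telescopes into the sum of the
martingale increments `u(Y_{t+1}) - (S u)(Y_t)`. These are orthogonal, and the mean square of each
is at most that of `u(Y_{t+1}) - u(k)`, whose expectation is `(S^{t+1} (u - u(k))²)(k)`, because a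
conditional mean minimises the conditional mean square.
-/

open Matrix

lemma sum_mul_sq_sub_mean_le {ι : Type*} [Fintype ι] (p v : ι → ℝ) (hp : ∑ j, p j = 1) (c : ℝ) :
    ∑ j, p j * (v j - ∑ l, p l * v l) ^ 2 ≤ ∑ j, p j * (v j - c) ^ 2 := by
  have expand : ∀ a : ℝ, ∑ j, p j * (v j - a) ^ 2
      = ∑ j, p j * v j ^ 2 - 2 * a * ∑ j, p j * v j + a ^ 2 := fun a => by
    have hterm : ∀ j, p j * (v j - a) ^ 2 = p j * v j ^ 2 - 2 * a * (p j * v j) + a ^ 2 * p j :=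
      fun j => by ring
    rw [sum_congr rfl fun j _ => hterm j, sum_add_distrib, sum_sub_distrib, ← mul_sum, ← mul_sum,
      hp, mul_one]
  rw [expand, expand]
  nlinarith [sq_nonneg (c - ∑ l, p l * v l)]

lemma summable_of_le_mul_shift {a : ℕ → ℝ} (ha : ∀ t, 0 ≤ a t) {M : ℕ} {c : ℝ} (hc : c < 1)
    (h : ∀ t, a (t + M) ≤ c * a t) : Summable a := by
  refine summable_of_sum_range_le (c := (∑ t ∈ range M, a t) / (1 - c)) ha fun N => ?_
  have hsplit : ∑ t ∈ range N, a t ≤ ∑ t ∈ range M, a t + ∑ t ∈ range N, a (M + t) := by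
    rw [← sum_range_add]
    exact sum_le_sum_of_subset_of_nonneg (range_mono (by omega)) fun t _ _ => ha t
  have hshift : ∑ t ∈ range N, a (M + t) ≤ c * ∑ t ∈ range N, a t := by
    rw [mul_sum]
    exact sum_le_sum fun t _ => add_comm M t ▸ h t
  rw [le_div_iff₀ (sub_pos.2 hc), mul_sub, mul_one]
  linarith

lemma mulVec_apply_nonneg {ι : Type*} [Fintype ι] {A : Matrix ι ι ℝ} (hA : ∀ i j, 0 ≤ A i j)
    {v : ι → ℝ} (hv : ∀ j, 0 ≤ v j) (i : ι) : 0 ≤ (A *ᵥ v) i :=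
  sum_nonneg fun j _ => mul_nonneg (hA i j) (hv j)

lemma mulVec_apply_le_mulVec_apply {ι : Type*} [Fintype ι] {A B : Matrix ι ι ℝ}
    (hA : ∀ i j, 0 ≤ A i j) (hAB : ∀ i j, A i j ≤ B i j) {v w : ι → ℝ} (hv : ∀ j, 0 ≤ v j)
    (hvw : ∀ j, v j ≤ w j) (i : ι) : (A *ᵥ v) i ≤ (B *ᵥ w) i :=
  sum_le_sum fun j _ => mul_le_mul (hAB i j) (hvw j) (hv j) ((hA i j).trans (hAB i j))

lemma pow_apply_nonneg_and_le {ι : Type*} [Fintype ι] [DecidableEq ι] {A B : Matrix ι ι ℝ}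
    (hA : ∀ i j, 0 ≤ A i j) (hAB : ∀ i j, A i j ≤ B i j) (t : ℕ) (i j : ι) :
    0 ≤ (A ^ t) i j ∧ (A ^ t) i j ≤ (B ^ t) i j := by
  induction t generalizing j with
  | zero => exact ⟨by by_cases h : i = j <;> simp [h], le_rfl⟩
  | succ t ih =>
    simp only [pow_succ, mul_apply]
    exact ⟨sum_nonneg fun l _ => mul_nonneg (ih l).1 (hA l j),
      sum_le_sum fun l _ => mul_le_mul (ih l).2 (hAB l j) (hA l j) ((ih l).1.trans (ih l).2)⟩

lemma norm_mulVec_le_of_mulVec_one_le {ι : Type*} [Fintype ι] {A : Matrix ι ι ℝ}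
    (hA : ∀ i j, 0 ≤ A i j) {c : ℝ} (hc : 0 ≤ c) (hrow : ∀ i, (A *ᵥ 1) i ≤ c) (v : ι → ℝ) :
    ‖A *ᵥ v‖ ≤ c * ‖v‖ := by
  refine (pi_norm_le_iff_of_nonneg (x := A *ᵥ v) (by positivity)).2 fun i => ?_
  calc ‖(A *ᵥ v) i‖ ≤ ∑ j, A i j * ‖v‖ := by
        refine (norm_sum_le _ _).trans (sum_le_sum fun j _ => ?_)
        rw [norm_mul, Real.norm_of_nonneg (hA i j)]
        exact mul_le_mul_of_nonneg_left (norm_le_pi_norm v j) (hA i j)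
    _ = (A *ᵥ 1) i * ‖v‖ := by simp [mulVec, dotProduct, sum_mul]
    _ ≤ c * ‖v‖ := mul_le_mul_of_nonneg_right (hrow i) (norm_nonneg v)

lemma tsum_pow_mulVec_eq_add {ι : Type*} [Fintype ι] [DecidableEq ι] {A : Matrix ι ι ℝ}
    {v : ι → ℝ}
    (hs : ∀ i, Summable fun t => (A ^ t *ᵥ v) i) :
    (fun i => ∑' t, (A ^ t *ᵥ v) i) = v + A *ᵥ fun i => ∑' t, (A ^ t *ᵥ v) i := by
  funext i
  rw [(hs i).tsum_eq_zero_add, pow_zero, one_mulVec, Pi.add_apply]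
  congr 1
  simp_rw [pow_succ', ← mulVec_mulVec]
  simp only [mulVec, dotProduct] at hs ⊢
  rw [Summable.tsum_finsetSum fun j _ => (hs j).mul_left (A i j)]
  exact sum_congr rfl fun j _ => tsum_mul_left

def extendPath (m : ℕ) (x : Fin (m + 1) → Fin n) : ℕ → Fin n := fun t => x (Fin.clamp t m)

def truncPath (m : ℕ) (ω : ℕ → Fin n) : Fin (m + 1) → Fin n := fun t => ω t

def splicePath (m : ℕ) (ω : ℕ → Fin n) (j : Fin n) : ℕ → Fin n :=
  fun t => if t ≤ m then ω t else j

def pathWeight (P : Matrix (Fin n) (Fin n) ℝ) (i : Fin n) (m : ℕ) (ω : ℕ → Fin n) : ℝ :=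
  (if ω 0 = i then 1 else 0) * ∏ t ∈ range m, P (ω t) (ω (t + 1))

/-- `E_i[f]` for `f` depending only on the first `m + 1` coordinates. -/
def pathSum (P : Matrix (Fin n) (Fin n) ℝ) (i : Fin n) (m : ℕ) (f : (ℕ → Fin n) → ℝ) : ℝ :=
  ∑ x : Fin (m + 1) → Fin n, pathWeight P i m (extendPath m x) * f (extendPath m x)

section PathSum

variable {P : Matrix (Fin n) (Fin n) ℝ} {i : Fin n} {m : ℕ}

lemma extendPath_apply {t : ℕ} (x : Fin (m + 1) → Fin n) (ht : t ≤ m) :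
    extendPath m x t = x ⟨t, Nat.lt_succ_of_le ht⟩ :=
  congrArg x (Fin.ext (by simpa [Fin.clamp] using ht))

lemma extendPath_truncPath {t : ℕ} (ω : ℕ → Fin n) (ht : t ≤ m) :
    extendPath m (truncPath m ω) t = ω t :=
  extendPath_apply _ ht

lemma splicePath_of_le {t : ℕ} (ω : ℕ → Fin n) (j : Fin n) (ht : t ≤ m) :
    splicePath m ω j t = ω t :=
  if_pos ht

lemma splicePath_succ (m : ℕ) (ω : ℕ → Fin n) (j : Fin n) : splicePath m ω j (m + 1) = j :=
  if_neg (by omega)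

lemma apply_splicePath_eq {β : Type*} {f : (ℕ → Fin n) → β}
    (hf : DependsOn f (Set.Iic m)) (ω : ℕ → Fin n) (j : Fin n) : f (splicePath m ω j) = f ω :=
  hf fun _ ht => splicePath_of_le ω j ht

lemma extendPath_snoc (m : ℕ) (x : Fin (m + 1) → Fin n) (j : Fin n) :
    extendPath (m + 1) (Fin.snoc x j) = splicePath m (extendPath m x) j := by
  funext t
  rcases le_or_gt t m with h | h
  · rw [splicePath_of_le _ _ h, extendPath_apply _ (h.trans m.le_succ), extendPath_apply _ h]
    exact Fin.snoc_castSucc (α := fun _ => Fin n) (i := ⟨t, Nat.lt_succ_of_le h⟩) ..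
  · rw [splicePath, if_neg h.not_ge, extendPath, Fin.clamp_eq_last _ _ h, Fin.snoc_last]

lemma pathWeight_splicePath (ω : ℕ → Fin n) (j : Fin n) :
    pathWeight P i (m + 1) (splicePath m ω j) = pathWeight P i m ω * P (ω m) j := by
  have hprod : ∏ t ∈ range m, P (splicePath m ω j t) (splicePath m ω j (t + 1))
      = ∏ t ∈ range m, P (ω t) (ω (t + 1)) :=
    prod_congr rfl fun t ht => by
      rw [splicePath_of_le _ _ (by simp at ht; omega), splicePath_of_le _ _ (by simp at ht; omega)]
  rw [pathWeight, prod_range_succ, hprod, splicePath_of_le _ _ m.zero_le,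
    splicePath_of_le _ _ le_rfl, splicePath_succ, pathWeight, mul_assoc]

lemma pathSum_succ (f : (ℕ → Fin n) → ℝ) :
    pathSum P i (m + 1) f = pathSum P i m (fun ω => ∑ j, P (ω m) j * f (splicePath m ω j)) := by
  rw [pathSum, ← (Fin.snocEquiv fun _ => Fin n).sum_comp, Fintype.sum_prod_type, sum_comm]
  refine sum_congr rfl fun x _ => ?_
  rw [mul_sum]
  refine sum_congr rfl fun j _ => ?_
  simp only [Fin.snocEquiv, Equiv.coe_fn_mk, extendPath_snoc, pathWeight_splicePath]
  ring

lemma pathSum_zero (f : (ℕ → Fin n) → ℝ) : pathSum P i 0 f = f (fun _ => i) := by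
  rw [pathSum, Fintype.sum_eq_single (fun _ => i)]
  · have hconst : extendPath 0 (fun _ : Fin 1 => i) = fun _ => i := rfl
    simp [pathWeight, hconst]
  · intro x hx
    have hx0 : extendPath 0 x 0 ≠ i := fun h => hx (funext fun t => by
      rw [Fin.eq_zero t, ← h, extendPath_apply x le_rfl]; rfl)
    simp [pathWeight, hx0]

lemma pathSum_congr {f g : (ℕ → Fin n) → ℝ} (h : ∀ ω, ω 0 = i → f ω = g ω) :
    pathSum P i m f = pathSum P i m g :=
  sum_congr rfl fun x _ => by
    by_cases hx : extendPath m x 0 = i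
    · rw [h _ hx]
    · simp [pathWeight, hx]

lemma pathSum_add (f g : (ℕ → Fin n) → ℝ) :
    pathSum P i m (f + g) = pathSum P i m f + pathSum P i m g := by
  simp only [pathSum, Pi.add_apply, mul_add, sum_add_distrib]

lemma pathSum_const_mul (c : ℝ) (f : (ℕ → Fin n) → ℝ) :
    pathSum P i m (fun ω => c * f ω) = c * pathSum P i m f := by
  simp only [pathSum, mul_sum, mul_left_comm]

lemma pathWeight_nonneg (hP : IsStochastic P) (ω : ℕ → Fin n) : 0 ≤ pathWeight P i m ω :=
  mul_nonneg (by positivity) (prod_nonneg fun _ _ => hP.1 _ _)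

lemma pathSum_mono (hP : IsStochastic P) {f g : (ℕ → Fin n) → ℝ} (h : ∀ ω, f ω ≤ g ω) :
    pathSum P i m f ≤ pathSum P i m g :=
  sum_le_sum fun _ _ => mul_le_mul_of_nonneg_left (h _) (pathWeight_nonneg hP _)

lemma pathSum_of_le (hP : IsStochastic P) {m' : ℕ} (hm : m' ≤ m) {f : (ℕ → Fin n) → ℝ}
    (hf : DependsOn f (Set.Iic m')) : pathSum P i m f = pathSum P i m' f := by
  induction m, hm using Nat.le_induction with
  | base => rfl
  | succ m hm ih =>
    rw [pathSum_succ, ← ih]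
    refine pathSum_congr fun ω _ => ?_
    simp only [apply_splicePath_eq (hf.mono (Set.Iic_subset_Iic.mpr hm)), ← sum_mul,
      hP.2, one_mul]

end PathSum

def killedMat (P : Matrix (Fin n) (Fin n) ℝ) (D : Finset (Fin n)) : Matrix (Fin n) (Fin n) ℝ :=
  fun i j => if i ∈ D then P i j else 0

lemma pathSum_killed (P : Matrix (Fin n) (Fin n) ℝ) (D : Finset (Fin n)) (i : Fin n) (t : ℕ)
    (Φ : Fin n → ℝ) :
    pathSum P i t (fun ω => if ∀ s < t, ω s ∈ D then Φ (ω t) else 0)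
      = (killedMat P D ^ t *ᵥ Φ) i := by
  induction t generalizing Φ with
  | zero => simp [pathSum_zero]
  | succ t ih =>
    rw [pathSum_succ, pow_succ, ← mulVec_mulVec, ← ih]
    refine pathSum_congr fun ω _ => ?_
    have hsplice : ∀ j, (∀ s < t + 1, splicePath t ω j s ∈ D) ↔ (∀ s < t, ω s ∈ D) ∧ ω t ∈ D :=
      fun j => by
        rw [Nat.forall_lt_succ_right, splicePath_of_le _ _ le_rfl]
        exact and_congr_left' (forall₂_congr fun s hs => by rw [splicePath_of_le _ _ hs.le])
    simp only [hsplice, splicePath_succ]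
    by_cases hpast : ∀ s < t, ω s ∈ D <;> by_cases hnow : ω t ∈ D <;>
      simp [hpast, hnow, killedMat, mulVec, dotProduct]

lemma pathSum_apply (P : Matrix (Fin n) (Fin n) ℝ) (i : Fin n) (t : ℕ) (Φ : Fin n → ℝ) :
    pathSum P i t (fun ω => Φ (ω t)) = (P ^ t *ᵥ Φ) i := by
  have := pathSum_killed P univ i t Φ
  simp only [mem_univ, implies_true, if_true] at this
  rw [this]
  congr
  ext a b
  simp [killedMat]

section Integral

variable {P : Matrix (Fin n) (Fin n) ℝ} {Pr : Fin n → Measure (ℕ → Fin n)} {i : Fin n} {m : ℕ}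

lemma measurable_truncPath (m : ℕ) : Measurable (truncPath (n := n) m) :=
  measurable_pi_lambda _ fun _ => measurable_pi_apply _

lemma apply_extendPath_truncPath_eq {β : Type*} {f : (ℕ → Fin n) → β}
    (hf : DependsOn f (Set.Iic m)) (ω : ℕ → Fin n) : f (extendPath m (truncPath m ω)) = f ω :=
  hf fun _ ht => extendPath_truncPath ω ht

lemma measureReal_map_truncPath (hPr : IsMarkovFamily P Pr) (x : Fin (m + 1) → Fin n) :
    ((Pr i).map (truncPath m)).real {x} = pathWeight P i m (extendPath m x) := by
  rw [measureReal_def, Measure.map_apply (measurable_truncPath m) (measurableSet_singleton x),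
    pathWeight, ← hPr.2 i m (extendPath m x)]
  congr 2
  ext ω
  simp only [Set.mem_preimage, Set.mem_singleton_iff, Set.mem_ofPred_eq, funext_iff,
    Fin.forall_iff, Nat.lt_succ_iff]
  exact forall₂_congr fun t ht => by rw [extendPath_apply x ht]; rfl

lemma integral_eq_pathSum (hPr : IsMarkovFamily P Pr) {f : (ℕ → Fin n) → ℝ}
    (hf : DependsOn f (Set.Iic m)) : ∫ ω, f ω ∂Pr i = pathSum P i m f := by
  have := hPr.1 i
  calc ∫ ω, f ω ∂Pr i = ∫ ω, f (extendPath m (truncPath m ω)) ∂Pr i := by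
        simp only [apply_extendPath_truncPath_eq hf]
    _ = ∫ x, f (extendPath m x) ∂(Pr i).map (truncPath m) :=
        (integral_map (φ := truncPath m) (f := fun x => f (extendPath m x))
          (measurable_truncPath m).aemeasurable Integrable.of_finite.1).symm
    _ = pathSum P i m f := by
        simp [integral_fintype Integrable.of_finite, measureReal_map_truncPath hPr, pathSum]

lemma lintegral_ofReal_eq_pathSum (hPr : IsMarkovFamily P Pr) {f : (ℕ → Fin n) → ℝ}
    (hf₀ : ∀ ω, 0 ≤ f ω) (hf : DependsOn f (Set.Iic m)) :
    ∫⁻ ω, ENNReal.ofReal (f ω) ∂Pr i = ENNReal.ofReal (pathSum P i m f) := by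
  have := hPr.1 i
  have hint : Integrable f (Pr i) := by
    simpa only [Function.comp_def, apply_extendPath_truncPath_eq hf] using
      (Integrable.of_finite (μ := (Pr i).map (truncPath m))
        (f := fun x => f (extendPath m x))).comp_measurable (measurable_truncPath m)
  rw [← integral_eq_pathSum hPr hf, ofReal_integral_eq_lintegral_ofReal hint (ae_of_all _ hf₀)]

end Integral

section Stopped

variable {P : Matrix (Fin n) (Fin n) ℝ} {D : Finset (Fin n)} {i : Fin n} {m : ℕ}

lemma isStochastic_stopMat (hP : IsStochastic P) : IsStochastic (stopMat P D) :=
  ⟨fun i j => by unfold stopMat; split_ifs <;> simp [hP.1],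
    fun i => by by_cases hi : i ∈ D <;> simp [stopMat, hi, hP.2]⟩

lemma stopped_succ (D : Finset (Fin n)) (ω : ℕ → Fin n) (t : ℕ) :
    stopped D ω (t + 1) = if stopped D ω t ∈ D then ω (t + 1) else stopped D ω t :=
  rfl

lemma stopped_eq_of_mem {ω : ℕ → Fin n} {t : ℕ} (h : stopped D ω t ∈ D) :
    stopped D ω t = ω t := by
  cases t with
  | zero => rfl
  | succ t =>
    by_cases ht : stopped D ω t ∈ D
    · rw [stopped_succ, if_pos ht]
    · rw [stopped_succ, if_neg ht] at h
      exact absurd h ht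

lemma dependsOn_stopped (D : Finset (Fin n)) (t : ℕ) :
    DependsOn (fun ω => stopped D ω t) (Set.Iic t) := by
  induction t with
  | zero => exact fun _ _ h => h 0 Set.self_mem_Iic
  | succ t ih =>
    intro ω ω' h
    simp only [stopped_succ, h (t + 1) Set.self_mem_Iic,
      ih fun s hs => h s (Set.mem_Iic.2 (Nat.le_succ_of_le hs))]

lemma dependsOn_comp_stopped {F : (ℕ → Fin n) → ℝ} (hF : DependsOn F (Set.Iic m)) :
    DependsOn (fun ω => F (stopped D ω)) (Set.Iic m) :=
  fun _ _ h => hF fun t ht => dependsOn_stopped D t fun s hs => h s (Set.Iic_subset_Iic.2 ht hs)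

lemma stopped_splicePath (ω : ℕ → Fin n) (j : Fin n) {t : ℕ} (ht : t ≤ m + 1) :
    stopped D (splicePath m ω j) t
      = splicePath m (stopped D ω) (if stopped D ω m ∈ D then j else stopped D ω m) t := by
  have hpast : stopped D (splicePath m ω j) m = stopped D ω m :=
    dependsOn_stopped D m fun s hs => splicePath_of_le ω j hs
  rcases ht.lt_or_eq with ht | rfl
  · rw [splicePath_of_le _ _ (Nat.lt_succ_iff.1 ht)]
    exact dependsOn_stopped D t fun s hs =>
      splicePath_of_le ω j (le_trans hs (Nat.lt_succ_iff.1 ht))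
  · rw [stopped_succ, splicePath_succ, splicePath_succ, hpast]

lemma sum_mul_stopped_step (hP : IsStochastic P) (G : Fin n → ℝ) (ω : ℕ → Fin n) (m : ℕ) :
    ∑ j, P (ω m) j * G (if stopped D ω m ∈ D then j else stopped D ω m)
      = ∑ j, stopMat P D (stopped D ω m) j * G j := by
  by_cases h : stopped D ω m ∈ D
  · simp only [if_pos h, stopMat]
    rw [stopped_eq_of_mem h]
  · simp [h, stopMat, ← sum_mul, hP.2]

theorem pathSum_comp_stopped (hP : IsStochastic P) {F : (ℕ → Fin n) → ℝ}
    (hF : DependsOn F (Set.Iic m)) :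
    pathSum P i m (fun ω => F (stopped D ω)) = pathSum (stopMat P D) i m F := by
  induction m generalizing F with
  | zero =>
    rw [pathSum_zero, pathSum_zero]
    exact hF fun t ht => by simp_all [stopped]
  | succ m ih =>
    have hG : DependsOn (fun y => ∑ j, stopMat P D (y m) j * F (splicePath m y j)) (Set.Iic m) :=
      fun y y' h => by
        simp only [h m Set.self_mem_Iic]
        refine sum_congr rfl fun j _ => congrArg _ (hF fun t _ => ?_)
        simp only [splicePath]
        split_ifs with htm
        exacts [h t htm, rfl]
    rw [pathSum_succ, pathSum_succ, ← ih hG]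
    refine pathSum_congr fun ω _ => ?_
    rw [← sum_mul_stopped_step hP]
    exact sum_congr rfl fun j _ => congrArg _ (hF fun t ht => stopped_splicePath ω j ht)

theorem integral_comp_stopped (hP : IsStochastic P) {Pr : Fin n → Measure (ℕ → Fin n)}
    (hPr : IsMarkovFamily P Pr) {F : (ℕ → Fin n) → ℝ} (hF : DependsOn F (Set.Iic m)) :
    ∫ ω, F (stopped D ω) ∂Pr i = pathSum (stopMat P D) i m F := by
  rw [integral_eq_pathSum hPr (dependsOn_comp_stopped hF), pathSum_comp_stopped hP hF]

end Stopped

section Martingale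

variable {P : Matrix (Fin n) (Fin n) ℝ} {i : Fin n} {m : ℕ}

def martingaleIncrement (P : Matrix (Fin n) (Fin n) ℝ) (u : Fin n → ℝ) (t : ℕ) (ω : ℕ → Fin n) :
    ℝ :=
  u (ω (t + 1)) - (P *ᵥ u) (ω t)

lemma dependsOn_martingaleIncrement (P : Matrix (Fin n) (Fin n) ℝ) (u : Fin n → ℝ) (t : ℕ) :
    DependsOn (martingaleIncrement P u t) (Set.Iic (t + 1)) := fun _ _ h => by
  simp only [martingaleIncrement, h (t + 1) Set.self_mem_Iic, h t (Set.mem_Iic.2 t.le_succ)]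

lemma dependsOn_sum_martingaleIncrement (P : Matrix (Fin n) (Fin n) ℝ) (u : Fin n → ℝ) (τ : ℕ) :
    DependsOn (fun ω => ∑ t ∈ range τ, martingaleIncrement P u t ω) (Set.Iic τ) := fun _ _ h =>
  sum_congr rfl fun t ht => dependsOn_martingaleIncrement P u t fun s hs =>
    h s (Set.Iic_subset_Iic.2 (mem_range.1 ht) hs)

lemma martingaleIncrement_splicePath (u : Fin n → ℝ) (t : ℕ) (ω : ℕ → Fin n) (j : Fin n) :
    martingaleIncrement P u t (splicePath t ω j) = u j - (P *ᵥ u) (ω t) := by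
  rw [martingaleIncrement, splicePath_succ, splicePath_of_le _ _ le_rfl]

lemma pathSum_mul_martingaleIncrement (hP : IsStochastic P) (u : Fin n → ℝ) {t : ℕ}
    {g : (ℕ → Fin n) → ℝ} (hg : DependsOn g (Set.Iic t)) (ht : t + 1 ≤ m) :
    pathSum P i m (fun ω => g ω * martingaleIncrement P u t ω) = 0 := by
  have hdep : DependsOn (fun ω => g ω * martingaleIncrement P u t ω) (Set.Iic (t + 1)) :=
    fun ω ω' h => by
      dsimp only
      rw [hg fun s hs => h s (Set.Iic_subset_Iic.2 t.le_succ hs),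
        dependsOn_martingaleIncrement P u t h]
  have hmean : ∀ ω : ℕ → Fin n, ∑ j, P (ω t) j * (u j - (P *ᵥ u) (ω t)) = 0 := fun ω => by
    rw [sum_congr rfl fun j _ => mul_sub _ _ _, sum_sub_distrib, ← sum_mul, hP.2, one_mul]
    exact sub_self _
  rw [pathSum_of_le hP ht hdep, pathSum_succ]
  simp only [apply_splicePath_eq hg, martingaleIncrement_splicePath, mul_left_comm _ (g _),
    ← mul_sum, hmean, mul_zero]
  simp [pathSum]

lemma pathSum_martingaleIncrement_sq_le (hP : IsStochastic P) (u : Fin n → ℝ) (c : ℝ) {t : ℕ}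
    (ht : t + 1 ≤ m) :
    pathSum P i m (fun ω => martingaleIncrement P u t ω ^ 2)
      ≤ (P ^ (t + 1) *ᵥ fun j => (u j - c) ^ 2) i := by
  have hdep : DependsOn (fun ω => martingaleIncrement P u t ω ^ 2) (Set.Iic (t + 1)) :=
    fun ω ω' h => by
      dsimp only
      rw [dependsOn_martingaleIncrement P u t h]
  rw [pathSum_of_le hP ht hdep, pathSum_succ, pow_succ, ← mulVec_mulVec, ← pathSum_apply]
  refine pathSum_mono hP fun ω => ?_
  simp only [martingaleIncrement_splicePath]
  exact sum_mul_sq_sub_mean_le _ u (hP.2 _) c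

lemma pathSum_sq_sum_martingaleIncrement (hP : IsStochastic P) (u : Fin n → ℝ) {τ : ℕ}
    (hτ : τ ≤ m) :
    pathSum P i m (fun ω => (∑ t ∈ range τ, martingaleIncrement P u t ω) ^ 2)
      = ∑ t ∈ range τ, pathSum P i m (fun ω => martingaleIncrement P u t ω ^ 2) := by
  induction τ with
  | zero => simp [pathSum]
  | succ τ ih =>
    set d := martingaleIncrement P u
    have hexpand : (fun ω => (∑ t ∈ range (τ + 1), d t ω) ^ 2)
        = (fun ω => (∑ t ∈ range τ, d t ω) ^ 2) + (fun ω => 2 * ((∑ t ∈ range τ, d t ω) * d τ ω))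
          + fun ω => d τ ω ^ 2 := by
      funext ω
      simp only [sum_range_succ, Pi.add_apply]
      ring
    rw [hexpand, pathSum_add, pathSum_add, pathSum_const_mul,
      pathSum_mul_martingaleIncrement hP u (dependsOn_sum_martingaleIncrement P u τ) hτ,
      ih (by omega), sum_range_succ, mul_zero, add_zero]

theorem pathSum_sq_le_of_poisson (hP : IsStochastic P) {u h : Fin n → ℝ} (hu : u = h + P *ᵥ u)
    (k : Fin n) (τ : ℕ) :
    pathSum P k τ (fun ω => (∑ t ∈ range τ, h (ω t) + u (ω τ) - u k) ^ 2)
      ≤ ∑ ℓ ∈ ({k}ᶜ : Finset (Fin n)), (u ℓ - u k) ^ 2 * ∑ t ∈ Icc 1 τ, (P ^ t) k ℓ := by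
  have htelescope : ∀ ω : ℕ → Fin n, ω 0 = k →
      ∑ t ∈ range τ, h (ω t) + u (ω τ) - u k = ∑ t ∈ range τ, martingaleIncrement P u t ω := by
    intro ω hω
    have hstep : ∀ t, martingaleIncrement P u t ω = h (ω t) + (u (ω (t + 1)) - u (ω t)) :=
      fun t => by
        have := congrFun hu (ω t)
        rw [Pi.add_apply] at this
        rw [martingaleIncrement]
        linarith
    rw [sum_congr rfl fun t _ => hstep t, sum_add_distrib, sum_range_sub (fun t => u (ω t)), hω]
    ring
  calc _ = pathSum P k τ (fun ω => (∑ t ∈ range τ, martingaleIncrement P u t ω) ^ 2) :=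
        pathSum_congr fun ω hω => by rw [htelescope ω hω]
    _ = ∑ t ∈ range τ, pathSum P k τ (fun ω => martingaleIncrement P u t ω ^ 2) :=
        pathSum_sq_sum_martingaleIncrement hP u le_rfl
    _ ≤ ∑ t ∈ range τ, (P ^ (t + 1) *ᵥ fun j => (u j - u k) ^ 2) k :=
        sum_le_sum fun t ht => pathSum_martingaleIncrement_sq_le hP u (u k) (mem_range.1 ht)
    _ = ∑ ℓ, (u ℓ - u k) ^ 2 * ∑ t ∈ Icc 1 τ, (P ^ t) k ℓ := by
        simp only [mulVec, dotProduct]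
        rw [sum_comm]
        refine sum_congr rfl fun ℓ _ => ?_
        rw [← sum_mul, mul_comm, ← Ico_add_one_right_eq_Icc, sum_Ico_eq_sum_range,
          Nat.add_sub_cancel]
        simp only [add_comm 1]
    _ = _ := by
        refine (sum_subset (subset_univ _) fun ℓ _ hℓ => ?_).symm
        rw [mem_compl, mem_singleton, not_not] at hℓ
        rw [hℓ, sub_self, zero_pow two_ne_zero, zero_mul]

end Martingale

section Killed

variable {P : Matrix (Fin n) (Fin n) ℝ} {D : Finset (Fin n)}

lemma killedMat_nonneg (hP : IsStochastic P) (i j : Fin n) : 0 ≤ killedMat P D i j := by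
  unfold killedMat; split_ifs <;> simp [hP.1]

lemma killedMat_le (hP : IsStochastic P) (i j : Fin n) : killedMat P D i j ≤ P i j := by
  unfold killedMat; split_ifs <;> simp [hP.1]

lemma killedMat_pow_nonneg (hP : IsStochastic P) (t : ℕ) (i j : Fin n) :
    0 ≤ (killedMat P D ^ t) i j :=
  (pow_apply_nonneg_and_le (killedMat_nonneg hP) (killedMat_le hP) t i j).1

lemma killedMat_pow_le (hP : IsStochastic P) (t : ℕ) (i j : Fin n) :
    (killedMat P D ^ t) i j ≤ (P ^ t) i j :=
  (pow_apply_nonneg_and_le (killedMat_nonneg hP) (killedMat_le hP) t i j).2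

lemma killedMat_mulVec_one (hP : IsStochastic P) (i : Fin n) :
    (killedMat P D *ᵥ 1) i = if i ∈ D then 1 else 0 := by
  by_cases hi : i ∈ D <;> simp [killedMat, hi, mulVec, dotProduct, hP.2]

lemma killedMat_mulVec_one_nonneg (hP : IsStochastic P) (i : Fin n) :
    0 ≤ (killedMat P D *ᵥ 1) i := by
  rw [killedMat_mulVec_one hP]
  split_ifs <;> simp

lemma killedMat_pow_mulVec_one_antitone (hP : IsStochastic P) {s t : ℕ} (hst : s ≤ t)
    (i : Fin n) : (killedMat P D ^ t *ᵥ 1) i ≤ (killedMat P D ^ s *ᵥ 1) i := by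
  induction t, hst using Nat.le_induction with
  | base => rfl
  | succ t _ ih =>
    refine le_trans ?_ ih
    rw [pow_succ, ← mulVec_mulVec]
    refine mulVec_apply_le_mulVec_apply (killedMat_pow_nonneg hP t) (fun _ _ => le_rfl)
      (killedMat_mulVec_one_nonneg hP) (fun j => ?_) i
    rw [killedMat_mulVec_one hP]
    split_ifs <;> simp

lemma killedMat_pow_mulVec_one_le_one_sub (hP : IsStochastic P) {j₀ : Fin n} (hj₀ : j₀ ∉ D)
    (m : ℕ) (i : Fin n) : (killedMat P D ^ (m + 1) *ᵥ 1) i ≤ 1 - (P ^ m) i j₀ := by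
  have hPm : P ^ m ∈ rowStochastic ℝ (Fin n) := pow_mem (mem_rowStochastic_iff_sum.2 hP) m
  have hstep : ∀ j, (killedMat P D *ᵥ 1) j ≤ (1 - Pi.single j₀ 1 : Fin n → ℝ) j := fun j => by
    rw [killedMat_mulVec_one hP]
    by_cases hj : j = j₀
    · simp [hj, hj₀]
    · by_cases hjD : j ∈ D <;> simp [hj, hjD]
  rw [pow_succ, ← mulVec_mulVec]
  calc (killedMat P D ^ m *ᵥ killedMat P D *ᵥ 1) i
      ≤ (P ^ m *ᵥ (1 - Pi.single j₀ 1)) i :=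
        mulVec_apply_le_mulVec_apply (killedMat_pow_nonneg hP m) (killedMat_pow_le hP m)
          (killedMat_mulVec_one_nonneg hP) hstep i
    _ = 1 - (P ^ m) i j₀ := by
        rw [mulVec_sub, one_vecMul_of_mem_rowStochastic hPm, mulVec_single_one]
        simp

lemma exists_killedMat_pow_mulVec_one_le [Nonempty (Fin n)] (hP : IsStochastic P)
    (hirr : IsIrreducible P) (hD : D ≠ univ) :
    ∃ M : ℕ, ∃ c, 0 ≤ c ∧ c < 1 ∧ ∀ i, (killedMat P D ^ M *ᵥ 1) i ≤ c := by
  obtain ⟨j₀, hj₀⟩ : ∃ j₀, j₀ ∉ D := by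
    by_contra! h
    exact hD (eq_univ_iff_forall.2 h)
  choose m _ hm using fun i => hirr i j₀
  have hlt : ∀ i, (killedMat P D ^ (∑ i, (m i + 1)) *ᵥ 1) i < 1 := fun i =>
    ((killedMat_pow_mulVec_one_antitone hP
      (single_le_sum (fun i _ => Nat.zero_le (m i + 1)) (mem_univ i)) i).trans
      (killedMat_pow_mulVec_one_le_one_sub hP hj₀ (m i) i)).trans_lt (by linarith [hm i])
  obtain ⟨i₀, hi₀⟩ := Finite.exists_max fun i => (killedMat P D ^ (∑ i, (m i + 1)) *ᵥ 1) i
  exact ⟨_, (killedMat P D ^ (∑ i, (m i + 1)) *ᵥ 1) i₀,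
    mulVec_apply_nonneg (killedMat_pow_nonneg hP _) (fun _ => zero_le_one) i₀, hlt i₀, hi₀⟩

lemma summable_killedMat_pow_mulVec (hP : IsStochastic P) (hirr : IsIrreducible P)
    (hD : D ≠ univ) (R : Fin n → ℝ) (i : Fin n) :
    Summable fun t => (killedMat P D ^ t *ᵥ R) i := by
  have : Nonempty (Fin n) := ⟨i⟩
  obtain ⟨M, c, hc0, hc1, hc⟩ := exists_killedMat_pow_mulVec_one_le hP hirr hD
  refine Summable.of_norm_bounded (g := fun t => ‖killedMat P D ^ t *ᵥ R‖) ?_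
    fun t => norm_le_pi_norm _ i
  refine summable_of_le_mul_shift (M := M) (fun t => norm_nonneg _) hc1 fun t => ?_
  rw [add_comm, pow_add, ← mulVec_mulVec]
  exact norm_mulVec_le_of_mulVec_one_le (killedMat_pow_nonneg hP M) hc0 hc _

end Killed

section ValueFunction

variable {P : Matrix (Fin n) (Fin n) ℝ} {Pr : Fin n → Measure (ℕ → Fin n)} {D : Finset (Fin n)}
  {R : Fin n → ℝ}

lemma le_exitT_iff (ω : ℕ → Fin n) (t : ℕ) : (t : ℕ∞) ≤ exitT D ω ↔ ∀ s < t, ω s ∈ D := by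
  simp only [exitT, le_iInf_iff, Nat.cast_le]
  exact ⟨fun h s hs => by_contra fun hD => absurd (h s hD) (not_le.2 hs),
    fun h s hD => le_of_not_gt fun hs => hD (h s hs)⟩

lemma lintegral_indicator_le_exitT (hPr : IsMarkovFamily P Pr) (hR : ∀ i, 0 ≤ R i) (i : Fin n)
    (t : ℕ) :
    ∫⁻ ω, Set.indicator {ω' | (t : ℕ∞) ≤ exitT D ω'} (fun ω' => ENNReal.ofReal (R (ω' t))) ω ∂Pr i
      = ENNReal.ofReal ((killedMat P D ^ t *ᵥ R) i) := by
  have hdep : DependsOn (fun ω => if ∀ s < t, ω s ∈ D then R (ω t) else 0) (Set.Iic t) :=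
    fun ω ω' h => by
      have hpast : (∀ s < t, ω s ∈ D) ↔ ∀ s < t, ω' s ∈ D :=
        forall₂_congr fun s hs => by rw [h s (Set.mem_Iic.2 hs.le)]
      simp only [hpast, h t Set.self_mem_Iic]
  rw [← pathSum_killed,
    ← lintegral_ofReal_eq_pathSum hPr (fun ω => by split_ifs <;> simp [hR]) hdep]
  refine lintegral_congr fun ω => ?_
  simp only [Set.indicator_apply, Set.mem_ofPred_eq, le_exitT_iff]
  split_ifs <;> simp

lemma valueR_eq_tsum (hP : IsStochastic P) (hirr : IsIrreducible P) (hD : D ≠ univ)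
    (hPr : IsMarkovFamily P Pr) (hR : ∀ i, 0 ≤ R i) (i : Fin n) :
    valueR Pr D R i = ∑' t, (killedMat P D ^ t *ᵥ R) i := by
  have hnonneg : ∀ t, 0 ≤ (killedMat P D ^ t *ᵥ R) i := fun t =>
    mulVec_apply_nonneg (killedMat_pow_nonneg hP t) hR i
  simp only [valueR, valueE, lintegral_indicator_le_exitT hPr hR]
  rw [← ENNReal.ofReal_tsum_of_nonneg hnonneg (summable_killedMat_pow_mulVec hP hirr hD R i),
    ENNReal.toReal_ofReal (tsum_nonneg hnonneg)]

theorem valueR_eq_add_stopMat_mulVec (hP : IsStochastic P) (hirr : IsIrreducible P)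
    (hD : D ≠ univ) (hPr : IsMarkovFamily P Pr) (hR : ∀ i, 0 ≤ R i) :
    valueR Pr D R = RD D R + stopMat P D *ᵥ valueR Pr D R := by
  have hu : valueR Pr D R = R + killedMat P D *ᵥ valueR Pr D R := by
    have := tsum_pow_mulVec_eq_add (summable_killedMat_pow_mulVec hP hirr hD R)
    rwa [← funext (valueR_eq_tsum hP hirr hD hPr hR)] at this
  funext i
  by_cases hi : i ∈ D
  · rw [congrFun hu i]
    simp [RD, stopMat, killedMat, hi, mulVec, dotProduct]
  · have hui : valueR Pr D R i = R i := by
      rw [congrFun hu i]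
      simp [killedMat, hi, mulVec, dotProduct]
    simp [RD, stopMat, hi, mulVec, dotProduct, hui]

end ValueFunction

theorem stmt13_general {n : ℕ} (D : Finset (Fin n))
    (hDne : D ≠ Finset.univ)
    (P : Matrix (Fin n) (Fin n) ℝ) (hP : IsStochastic P) (hirr : IsIrreducible P)
    (Pr : Fin n → Measure (ℕ → Fin n)) (hPr : IsMarkovFamily P Pr)
    (R : Fin n → ℝ) (hR : ∀ i, 0 ≤ R i)
    (τ : ℕ) (k : Fin n) :
    (∫ ω, (∑ t ∈ Finset.range τ, RD D R (stopped D ω t)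
        + valueR Pr D R (stopped D ω τ) - valueR Pr D R k) ^ 2 ∂(Pr k))
      ≤ ∑ ℓ ∈ ({k}ᶜ : Finset (Fin n)),
          (valueR Pr D R ℓ - valueR Pr D R k) ^ 2 *
            ∑ t ∈ Finset.Icc 1 τ, (stopMat P D ^ t) k ℓ := by
  set u := valueR Pr D R
  have hF : DependsOn (fun y => (∑ t ∈ range τ, RD D R (y t) + u (y τ) - u k) ^ 2)
      (Set.Iic τ) := fun y y' h => by
    have hpast : ∑ t ∈ range τ, RD D R (y t) = ∑ t ∈ range τ, RD D R (y' t) :=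
      sum_congr rfl fun t ht => by rw [h t (Set.mem_Iic.2 (mem_range.1 ht).le)]
    simp only [hpast, h τ Set.self_mem_Iic]
  rw [integral_comp_stopped hP hPr hF]
  exact pathSum_sq_le_of_poisson (isStochastic_stopMat hP)
    (valueR_eq_add_stopMat_mulVec hP hirr hDne hPr hR) k τ

/-- Eq. (28) of the paper, variance decomposition: for `k ∈ D` and `τ ≥ 1`,
`E_k[(∑_{t=0}^{τ-1} R_D(X_{t∧T}) + u(X_{τ∧T}) - u(k))²]
  ≤ ∑_{ℓ≠k} (u(ℓ) - u(k))² ∑_{t=1}^{τ} S^t(k,ℓ)`. -/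
theorem stmt13 {n : ℕ} (hn : 2 ≤ n) (D : Finset (Fin n)) (hD : D.Nonempty)
    (hDne : D ≠ Finset.univ)
    (P : Matrix (Fin n) (Fin n) ℝ) (hP : IsStochastic P) (hirr : IsIrreducible P)
    (Pr : Fin n → Measure (ℕ → Fin n)) (hPr : IsMarkovFamily P Pr)
    (R : Fin n → ℝ) (hR : ∀ i, 0 ≤ R i)
    (τ : ℕ) (hτ : 1 ≤ τ) (k : Fin n) (hk : k ∈ D) :
    (∫ ω, (∑ t ∈ Finset.range τ, RD D R (stopped D ω t)
        + valueR Pr D R (stopped D ω τ) - valueR Pr D R k) ^ 2 ∂(Pr k))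
      ≤ ∑ ℓ ∈ ({k}ᶜ : Finset (Fin n)),
          (valueR Pr D R ℓ - valueR Pr D R k) ^ 2 *
            ∑ t ∈ Finset.Icc 1 τ, (stopMat P D ^ t) k ℓ :=
  stmt13_general D hDne P hP hirr Pr hPr R hR τ k

end RareTD
end
end

section
/- For every i ∈ [n]: if i + 1 ≤ n then P(i,i+1) ≥ 1/(2(1+e)), and if i − 1 ≥ 1 then P(i,i−1) ≥ 1/(2(1+e)), where e is Euler's number. -/
/-!
Writing `w n i = a cos (b (i - 1))` with `a * b = 1` (or `a = 0` when `n = 1`), the potential is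
`1`-Lipschitz in `i` because `cos` is. Hence neighbouring weights satisfy `p i ≤ e p j`, and then
`p j / (2 (p i + p j)) ≥ 1 / (2 (1 + e))`.
-/

open Finset Filter
open scoped Real

noncomputable section

namespace RareChain

/-- The potential `w(i) = ((n-1)/(4π)) cos(4π(i-1)/(n-1))`. -/
def w (n i : ℕ) : ℝ :=
  ((n : ℝ) - 1) / (4 * Real.pi) * Real.cos (4 * Real.pi * ((i : ℝ) - 1) / ((n : ℝ) - 1))

/-- The normalizing constant `Z = ∑_{j=1}^n e^{w(j)}`. -/
def Z (n : ℕ) : ℝ := ∑ j ∈ Finset.Icc 1 n, Real.exp (w n j)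

/-- The invariant probability vector `p(i) = e^{w(i)} / Z`. -/
def p (n i : ℕ) : ℝ := Real.exp (w n i) / Z n

/-- The nearest-neighbor transition matrix of Section 3 of the paper (indices in `{1,…,n}`,
entries outside read as `0`). -/
def Pmat (n : ℕ) (i j : ℕ) : ℝ :=
  if i < 1 ∨ n < i ∨ j < 1 ∨ n < j then 0
  else if j = i + 1 then p n (i + 1) / (2 * (p n i + p n (i + 1)))
  else if j + 1 = i then p n (i - 1) / (2 * (p n i + p n (i - 1)))
  else if j = i then
    1 - (if i + 1 ≤ n then p n (i + 1) / (2 * (p n i + p n (i + 1))) else 0)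
      - (if 2 ≤ i then p n (i - 1) / (2 * (p n i + p n (i - 1))) else 0)
  else 0

lemma one_div_two_mul_one_add_le_div {a b r : ℝ} (ha : 0 ≤ a) (hb : 0 < b) (hab : a ≤ r * b) :
    1 / (2 * (1 + r)) ≤ b / (2 * (a + b)) := by
  have hr : 0 ≤ r := nonneg_of_mul_nonneg_left (ha.trans hab) hb
  rw [div_le_div_iff₀ (by positivity) (by positivity)]
  linarith

lemma abs_w_sub_w_le (n i j : ℕ) : |w n i - w n j| ≤ |(i : ℝ) - j| := by
  set a : ℝ := ((n : ℝ) - 1) / (4 * π)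
  set b : ℝ := 4 * π / ((n : ℝ) - 1)
  have hw (k : ℕ) : w n k = a * Real.cos (b * ((k : ℝ) - 1)) := by
    simp only [w, a, b, mul_div_right_comm]
  have hab : |a| * |b| ≤ 1 := by
    rw [← abs_mul]
    by_cases hn : (n : ℝ) - 1 = 0
    · simp [a, hn]
    · rw [show a * b = 1 by simp only [a, b]; field_simp, abs_one]
  calc |w n i - w n j|
      = |a| * |Real.cos (b * ((i : ℝ) - 1)) - Real.cos (b * ((j : ℝ) - 1))| := by
        rw [hw, hw, ← mul_sub, abs_mul]
    _ ≤ |a| * (|b| * |(i : ℝ) - j|) := by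
        gcongr
        refine (Real.abs_cos_sub_cos_le _ _).trans_eq ?_
        rw [← abs_mul]
        ring_nf
    _ ≤ |(i : ℝ) - j| := by
        rw [← mul_assoc]
        exact mul_le_of_le_one_left (abs_nonneg _) hab

lemma Z_pos {n : ℕ} (hn : 1 ≤ n) : 0 < Z n :=
  sum_pos (fun _ _ => Real.exp_pos _) ⟨1, mem_Icc.2 ⟨le_rfl, hn⟩⟩

lemma p_pos {n : ℕ} (hn : 1 ≤ n) (i : ℕ) : 0 < p n i :=
  div_pos (Real.exp_pos _) (Z_pos hn)

lemma p_le_exp_one_mul_p {n i j : ℕ} (hij : |(i : ℝ) - j| ≤ 1) :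
    p n i ≤ Real.exp 1 * p n j := by
  have hw : w n i ≤ 1 + w n j := by
    linarith [(le_abs_self _).trans ((abs_w_sub_w_le n i j).trans hij)]
  rw [p, p, ← mul_div_assoc, ← Real.exp_add]
  exact div_le_div_of_nonneg_right (Real.exp_le_exp.2 hw) (sum_nonneg fun _ _ => (Real.exp_pos _).le)

lemma one_div_two_mul_one_add_exp_one_le {n i j : ℕ} (hn : 1 ≤ n) (hij : |(i : ℝ) - j| ≤ 1) :
    1 / (2 * (1 + Real.exp 1)) ≤ p n j / (2 * (p n i + p n j)) :=
  one_div_two_mul_one_add_le_div (p_pos hn i).le (p_pos hn j) (p_le_exp_one_mul_p hij)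

lemma Pmat_succ {n i : ℕ} (hi : 1 ≤ i) (hin : i + 1 ≤ n) :
    Pmat n i (i + 1) = p n (i + 1) / (2 * (p n i + p n (i + 1))) := by
  rw [Pmat, if_neg (by omega), if_pos rfl]

lemma Pmat_pred {n i : ℕ} (hi : 2 ≤ i) (hin : i ≤ n) :
    Pmat n i (i - 1) = p n (i - 1) / (2 * (p n i + p n (i - 1))) := by
  rw [Pmat, if_neg (by omega), if_neg (by omega), if_pos (by omega)]

theorem stmt16_general (n : ℕ) (i : ℕ) (hi1 : 1 ≤ i) (hin : i ≤ n) :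
    (i + 1 ≤ n → 1 / (2 * (1 + Real.exp 1)) ≤ Pmat n i (i + 1)) ∧
    (2 ≤ i → 1 / (2 * (1 + Real.exp 1)) ≤ Pmat n i (i - 1)) := by
  have hn : 1 ≤ n := hi1.trans hin
  refine ⟨fun hi => ?_, fun hi => ?_⟩
  · rw [Pmat_succ hi1 hi]
    refine one_div_two_mul_one_add_exp_one_le hn ?_
    push_cast
    rw [sub_add_cancel_left, abs_neg, abs_one]
  · rw [Pmat_pred hi hin]
    refine one_div_two_mul_one_add_exp_one_le hn ?_
    rw [Nat.cast_sub (by omega), Nat.cast_one, sub_sub_cancel, abs_one]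

/-- nearest-neighbor transition probabilities are uniformly bounded below,
`P(i, i±1) ≥ 1/(2(1+e))`. -/
theorem stmt16 (n : ℕ) (hn : 3 ≤ n) (i : ℕ) (hi1 : 1 ≤ i) (hin : i ≤ n) :
    (i + 1 ≤ n → 1 / (2 * (1 + Real.exp 1)) ≤ Pmat n i (i + 1)) ∧
    (2 ≤ i → 1 / (2 * (1 + Real.exp 1)) ≤ Pmat n i (i - 1)) :=
  stmt16_general n i hi1 hin

end RareChain
end
end
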